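/- arXiv:2011.14228 — 5 statements merged into one kernel-verified Lean document; each statement's English description precedes it below -/
import Mathlib

section
/- Let E be a real inner product space and let g, g', p ∈ E be nonzero vectors with ⟨g', p⟩ = 0 and ⟨g, p⟩ = -‖g‖². Set α' = ⟨g', g' - g⟩/‖g‖² and p' = -g' + α' p. Let θ be the angle between p and -g and θ' the angle between p' and -g'. Then tan θ' ≤ (1/cos θ)·‖g' - g‖/‖g‖, i.e. tan θ' ≤ sec θ · ‖g' - g‖/‖g‖. -/
open scoped RealInnerProductSpace

/-- For consecutive PRP gradients `g`, `g'` and directions `p`,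
`p' = -g' + α' • p` with the exact line search orthogonality `⟪g', p⟫ = 0`, the
descent identity `⟪g, p⟫ = -‖g‖²`, and the PRP parameter
`α' = ⟪g', g' - g⟫/‖g‖²`, the angles `θ = ∠(p, -g)` and `θ' = ∠(p', -g')`
satisfy `tan θ' ≤ sec θ · ‖g' - g‖/‖g‖`. -/
theorem prp_tan_angle_bound
    {E : Type*} [NormedAddCommGroup E] [InnerProductSpace ℝ E]
    (g g' p : E) (hg : g ≠ 0) (hg' : g' ≠ 0) (hp : p ≠ 0)
    (horth : ⟪g', p⟫ = 0) (hdesc : ⟪g, p⟫ = -‖g‖ ^ 2)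
    (α' : ℝ) (hα' : α' = ⟪g', g' - g⟫ / ‖g‖ ^ 2)
    (p' : E) (hp' : p' = -g' + α' • p) :
    Real.tan (InnerProductGeometry.angle p' (-g')) ≤
      (1 / Real.cos (InnerProductGeometry.angle p (-g))) * (‖g' - g‖ / ‖g‖) := by
  have hA : (0:ℝ) < ‖g‖ := norm_pos_iff.mpr hg
  have hB : (0:ℝ) < ‖g'‖ := norm_pos_iff.mpr hg'
  have hP : (0:ℝ) < ‖p‖ := norm_pos_iff.mpr hp
  -- inner product computations
  have horth2 : ⟪p, g'⟫ = 0 := by rw [real_inner_comm]; exact horth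
  have hinner1 : ⟪p', -g'⟫ = ‖g'‖ ^ 2 := by
    rw [hp', inner_add_left, inner_neg_neg, real_inner_self_eq_norm_sq,
      real_inner_smul_left, inner_neg_right, horth2]
    ring
  have hnorm : ‖p'‖ ^ 2 = ‖g'‖ ^ 2 + α' ^ 2 * ‖p‖ ^ 2 := by
    have h0 : ⟪-g', α' • p⟫ = (0:ℝ) := by
      rw [inner_neg_left, real_inner_smul_right, horth]; ring
    rw [hp', norm_add_sq_real, h0, norm_neg, norm_smul, Real.norm_eq_abs, mul_pow, sq_abs]
    ring
  have hp'pos : (0:ℝ) < ‖p'‖ := by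
    have h2 : (0:ℝ) < ‖p'‖ ^ 2 := by nlinarith
    nlinarith [norm_nonneg p']
  -- cos θ = ‖g‖/‖p‖
  have hinner2 : ⟪p, -g⟫ = ‖g‖ ^ 2 := by
    rw [inner_neg_right, real_inner_comm, hdesc]; ring
  have hcos : Real.cos (InnerProductGeometry.angle p (-g)) = ‖g‖ / ‖p‖ := by
    rw [InnerProductGeometry.cos_angle, hinner2, norm_neg, pow_two, mul_comm ‖p‖ ‖g‖,
      mul_div_mul_left _ _ (ne_of_gt hA)]
  -- tan θ' = |α'| ‖p‖ / ‖g'‖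
  have hangle' : InnerProductGeometry.angle p' (-g') = Real.arccos (‖g'‖ / ‖p'‖) := by
    rw [InnerProductGeometry.angle, hinner1, norm_neg]
    congr 1
    rw [pow_two, mul_comm ‖p'‖ ‖g'‖, mul_div_mul_left _ _ (ne_of_gt hB)]
  have htan : Real.tan (InnerProductGeometry.angle p' (-g')) = |α'| * ‖p‖ / ‖g'‖ := by
    rw [hangle', Real.tan_arccos]
    have h1 : 1 - (‖g'‖ / ‖p'‖) ^ 2 = ((|α'| * ‖p‖) / ‖p'‖) ^ 2 := by
      rw [div_pow, div_pow, mul_pow, sq_abs]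
      field_simp
      nlinarith
    rw [h1, Real.sqrt_sq (by positivity)]
    field_simp
  -- Cauchy–Schwarz bound on α'
  have hcs : |α'| ≤ ‖g'‖ * ‖g' - g‖ / ‖g‖ ^ 2 := by
    rw [hα', abs_div, abs_of_pos (by positivity : (0:ℝ) < ‖g‖ ^ 2)]
    exact div_le_div_of_nonneg_right (abs_real_inner_le_norm g' (g' - g)) (by positivity) |>.trans_eq rfl
  rw [htan, hcos]
  rw [one_div, inv_div]
  rw [div_le_iff₀ hB]
  have key : |α'| * ‖p‖ ≤ ‖p‖ / ‖g‖ * (‖g' - g‖ / ‖g‖) * ‖g'‖ := by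
    have h2 : |α'| * ‖p‖ ≤ (‖g'‖ * ‖g' - g‖ / ‖g‖ ^ 2) * ‖p‖ :=
      mul_le_mul_of_nonneg_right hcs (norm_nonneg p)
    calc |α'| * ‖p‖ ≤ (‖g'‖ * ‖g' - g‖ / ‖g‖ ^ 2) * ‖p‖ := h2
      _ = ‖p‖ / ‖g‖ * (‖g' - g‖ / ‖g‖) * ‖g'‖ := by field_simp
  exact key
end

section
/- Let E be a finite-dimensional real inner product space and f : E → ℝ differentiable, bounded below, whose gradient ∇f is Lipschitz continuous with constant M > 0. Let iterates q^{n+1} = q^n + β^n p^n be generated with nonzero directions p^n satisfying the descent condition ⟨g^n, p^n⟩ ≤ 0, where g^n = ∇f(q^n), and with step size β^n obtained by exact line search (β^n minimizes β ↦ f(q^n + β p^n) over ℝ). Then the Zoutendijk series converges: ∑_{n≥1} ⟨g^n, p^n⟩²/‖p^n‖² < ∞; equivalently, ∑_{n≥1} ‖g^n‖² cos²θ_n < ∞, where θ_n is the angle between p^n and -g^n. -/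
open scoped RealInnerProductSpace

/-!
A Lipschitz gradient gives the quadratic upper bound
`f (x + v) ≤ f x + ⟪∇f x, v⟫ + M/2 ‖v‖²`. Exact line search does at least as well as the
minimiser of this bound along `p`, so every step decreases `f` by at least
`⟪g, p⟫² / (2 M ‖p‖²)`. Since `f` is bounded below, these decreases telescope to a finite sum.
Finally `‖g‖ cos θ = -⟪g, p⟫ / ‖p‖`.
-/

open Finset InnerProductGeometry InnerProductSpace

theorem image_add_le_of_lipschitz_fderiv {E : Type*} [NormedAddCommGroup E] [NormedSpace ℝ E]
    {f : E → ℝ} {f' : E → E →L[ℝ] ℝ} {M : ℝ} (hf : ∀ x, HasFDerivAt f (f' x) x)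
    (hLip : ∀ x y, ‖f' x - f' y‖ ≤ M * ‖x - y‖) (x v : E) :
    f (x + v) ≤ f x + f' x v + M / 2 * ‖v‖ ^ 2 := by
  have hline : ∀ t : ℝ, HasDerivAt (fun s : ℝ => f (x + s • v)) (f' (x + t • v) v) t := fun t => by
    simpa [Function.comp_def] using
      (hf (x + t • v)).comp_hasDerivAt t (((hasDerivAt_id t).smul_const v).const_add x)
  have hparabola : ∀ t : ℝ, HasDerivAt (fun s : ℝ => f x + s * f' x v + M / 2 * s ^ 2 * ‖v‖ ^ 2)
      (f' x v + M * t * ‖v‖ ^ 2) t := fun t => by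
    refine ((((hasDerivAt_id t).mul_const (f' x v)).const_add (f x)).add
      (((hasDerivAt_pow 2 t).const_mul (M / 2)).mul_const (‖v‖ ^ 2))).congr_deriv ?_
    simp only [Nat.cast_ofNat]
    ring
  have hslope : ∀ t ∈ Set.Ico (0 : ℝ) 1, f' (x + t • v) v ≤ f' x v + M * t * ‖v‖ ^ 2 := by
    rintro t ⟨ht, -⟩
    calc f' (x + t • v) v = f' x v + (f' (x + t • v) - f' x) v := by simp
      _ ≤ f' x v + ‖f' (x + t • v) - f' x‖ * ‖v‖ :=
        add_le_add_right ((Real.le_norm_self _).trans (ContinuousLinearMap.le_opNorm _ _)) _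
      _ ≤ f' x v + M * ‖t • v‖ * ‖v‖ := by gcongr; simpa using hLip (x + t • v) x
      _ = f' x v + M * t * ‖v‖ ^ 2 := by rw [norm_smul, Real.norm_of_nonneg ht]; ring
  simpa using image_le_of_deriv_right_le_deriv_boundary
    (fun t _ => (hline t).continuousAt.continuousWithinAt) (fun t _ => (hline t).hasDerivWithinAt)
    (by simp) (fun t _ => (hparabola t).continuousAt.continuousWithinAt)
    (fun t _ => (hparabola t).hasDerivWithinAt) hslope (Set.right_mem_Icc.2 zero_le_one)

section Gradient

variable {E : Type*} [NormedAddCommGroup E] [InnerProductSpace ℝ E] [CompleteSpace E]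
  {f : E → ℝ} {M : ℝ}

theorem image_add_le_of_lipschitz_gradient (hf : Differentiable ℝ f)
    (hLip : ∀ x y, ‖gradient f x - gradient f y‖ ≤ M * ‖x - y‖) (x v : E) :
    f (x + v) ≤ f x + ⟪gradient f x, v⟫ + M / 2 * ‖v‖ ^ 2 :=
  image_add_le_of_lipschitz_fderiv (f' := fun x => toDual ℝ E (gradient f x))
    (fun x => (hf x).hasGradientAt.hasFDerivAt)
    (fun x y => by simpa only [← map_sub, LinearIsometryEquiv.norm_map] using hLip x y) x v

theorem sq_inner_gradient_div_le_of_line_search (hf : Differentiable ℝ f)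
    (hLip : ∀ x y, ‖gradient f x - gradient f y‖ ≤ M * ‖x - y‖) (hM : 0 < M) {x p : E} {β : ℝ}
    (hβ : ∀ b : ℝ, f (x + β • p) ≤ f (x + b • p)) :
    ⟪gradient f x, p⟫ ^ 2 / ‖p‖ ^ 2 ≤ 2 * M * (f x - f (x + β • p)) := by
  rcases eq_or_ne p 0 with rfl | hp
  · simp
  set c := ⟪gradient f x, p⟫
  -- `b` minimises the quadratic upper bound `b ↦ f x + b c + M/2 b² ‖p‖²`
  let b := -c / (M * ‖p‖ ^ 2)
  have hmin : f (x + β • p) ≤ f x - c ^ 2 / ‖p‖ ^ 2 / (2 * M) :=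
    calc f (x + β • p) ≤ f (x + b • p) := hβ b
      _ ≤ f x + ⟪gradient f x, b • p⟫ + M / 2 * ‖b • p‖ ^ 2 :=
        image_add_le_of_lipschitz_gradient hf hLip x (b • p)
      _ = f x - c ^ 2 / ‖p‖ ^ 2 / (2 * M) := by
        rw [real_inner_smul_right, norm_smul, mul_pow, Real.norm_eq_abs, sq_abs]
        simp only [b]
        field_simp
        ring
  calc c ^ 2 / ‖p‖ ^ 2 = 2 * M * (c ^ 2 / ‖p‖ ^ 2 / (2 * M)) := by field_simp
    _ ≤ 2 * M * (f x - f (x + β • p)) := by gcongr; linarith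

end Gradient

theorem summable_of_le_sub_succ {a u : ℕ → ℝ} {C : ℝ} (ha : ∀ n, 0 ≤ a n) (hu : ∀ n, C ≤ u n)
    (hau : ∀ n, a n ≤ u n - u (n + 1)) : Summable a :=
  summable_of_sum_range_le ha fun n =>
    calc ∑ i ∈ range n, a i ≤ ∑ i ∈ range n, (u i - u (i + 1)) := sum_le_sum fun i _ => hau i
      _ = u 0 - u n := sum_range_sub' u n
      _ ≤ u 0 - C := by linarith [hu n]

theorem sq_norm_mul_cos_angle_neg_sq {E : Type*} [NormedAddCommGroup E] [InnerProductSpace ℝ E]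
    (g p : E) : ‖g‖ ^ 2 * Real.cos (angle p (-g)) ^ 2 = ⟪g, p⟫ ^ 2 / ‖p‖ ^ 2 := by
  rcases eq_or_ne g 0 with rfl | hg
  · simp
  rcases eq_or_ne p 0 with rfl | hp
  · simp
  rw [cos_angle, inner_neg_right, norm_neg, real_inner_comm]
  field_simp

theorem zoutendijk_condition_general
    {E : Type*} [NormedAddCommGroup E] [InnerProductSpace ℝ E] [FiniteDimensional ℝ E]
    (f : E → ℝ) (hf : Differentiable ℝ f)
    (hbdd : BddBelow (Set.range f))
    (M : ℝ) (hM : 0 < M)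
    (hLip : ∀ x y : E, ‖gradient f x - gradient f y‖ ≤ M * ‖x - y‖)
    (q p g : ℕ → E) (β : ℕ → ℝ)
    (hg : ∀ n, g n = gradient f (q n))
    (hq : ∀ n, q (n + 1) = q n + β n • p n)
    (hls : ∀ n, ∀ b : ℝ, f (q n + β n • p n) ≤ f (q n + b • p n)) :
    Summable (fun n => ⟪g n, p n⟫ ^ 2 / ‖p n‖ ^ 2) ∧
      Summable (fun n =>
        ‖g n‖ ^ 2 * Real.cos (InnerProductGeometry.angle (p n) (-(g n))) ^ 2) := by
  obtain ⟨C, hC⟩ := hbdd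
  have hdecrease : ∀ n, ⟪g n, p n⟫ ^ 2 / ‖p n‖ ^ 2 ≤ 2 * M * f (q n) - 2 * M * f (q (n + 1)) :=
    fun n => by
      rw [hg n, hq n, ← mul_sub]
      exact sq_inner_gradient_div_le_of_line_search hf hLip hM (hls n)
  have hsummable : Summable fun n => ⟪g n, p n⟫ ^ 2 / ‖p n‖ ^ 2 :=
    summable_of_le_sub_succ (fun n => by positivity)
      (fun n => mul_le_mul_of_nonneg_left (hC ⟨q n, rfl⟩) (by positivity)) hdecrease
  exact ⟨hsummable, by simpa only [sq_norm_mul_cos_angle_neg_sq] using hsummable⟩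

/-- Zoutendijk condition: if `f` is differentiable, bounded below,
with `M`-Lipschitz gradient, the directions `p^n ≠ 0` are descent directions
(`⟪g^n, p^n⟫ ≤ 0`), and the step sizes come from exact line search, then
`∑ ⟪g^n, p^n⟫²/‖p^n‖² < ∞`, equivalently `∑ ‖g^n‖² cos² θ_n < ∞` where `θ_n` is
the angle between `p^n` and `-g^n`. -/
theorem zoutendijk_condition
    {E : Type*} [NormedAddCommGroup E] [InnerProductSpace ℝ E] [FiniteDimensional ℝ E]
    (f : E → ℝ) (hf : Differentiable ℝ f)
    (hbdd : BddBelow (Set.range f))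
    (M : ℝ) (hM : 0 < M)
    (hLip : ∀ x y : E, ‖gradient f x - gradient f y‖ ≤ M * ‖x - y‖)
    (q p g : ℕ → E) (β : ℕ → ℝ)
    (hg : ∀ n, g n = gradient f (q n))
    (hq : ∀ n, q (n + 1) = q n + β n • p n)
    (hpne : ∀ n, p n ≠ 0)
    (hdesc : ∀ n, ⟪g n, p n⟫ ≤ 0)
    (hls : ∀ n, ∀ b : ℝ, f (q n + β n • p n) ≤ f (q n + b • p n)) :
    Summable (fun n => ⟪g n, p n⟫ ^ 2 / ‖p n‖ ^ 2) ∧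
      Summable (fun n =>
        ‖g n‖ ^ 2 * Real.cos (InnerProductGeometry.angle (p n) (-(g n))) ^ 2) :=
  zoutendijk_condition_general f hf hbdd M hM hLip q p g β hg hq hls
end

section
/- Let E be a finite-dimensional real inner product space and f : E → ℝ differentiable and uniformly convex (m-strongly convex for some m > 0). Let iterates q^{n+1} = q^n + β^n p^n be generated with step sizes β^n obtained by exact line search (β^n minimizes β ↦ f(q^n + β p^n) over ℝ), and set s^n = q^{n+1} - q^n. Then there exists a constant c > 0 such that f(q^n) - f(q^n + s^n) ≥ c‖s^n‖² for all n; and if in addition f is bounded below, then ‖s^n‖ → 0 as n → ∞. -/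
open scoped RealInnerProductSpace
open Filter Set Topology

/-!
At the exact line-search point `y = x + β • p` the restriction `t ↦ f (x + t • p)` is minimal,
so `∇f y ⟂ p`. Strong convexity at `y`, evaluated at `x = y - β • p`, then loses the linear term
and gives `f y + m/2 ‖β • p‖² ≤ f x`. If `f` is bounded below, the values `f (q n)` decrease to
a limit, so their successive differences, which dominate `m/2 ‖s n‖²`, tend to `0`.
-/

section LineSearch

variable {E : Type*} [NormedAddCommGroup E] [InnerProductSpace ℝ E] [CompleteSpace E]
  {f : E → ℝ}

/-- Where `f` is not differentiable, `gradient f x` is the junk value `0`. -/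
theorem inner_gradient_eq_zero_of_forall_le_line {x p : E}
    (hmin : ∀ t : ℝ, f x ≤ f (x + t • p)) : ⟪gradient f x, p⟫ = 0 := by
  by_cases hfx : DifferentiableAt ℝ f x
  · have hline : HasDerivAt (fun t : ℝ => x + t • p) p 0 := by
      simpa using ((hasDerivAt_id (0 : ℝ)).smul_const p).const_add x
    have hfx' :
        HasFDerivAt f (InnerProductSpace.toDual ℝ E (gradient f x)) (x + (0 : ℝ) • p) := by
      simpa using hfx.hasGradientAt.hasFDerivAt
    have hderiv : HasDerivAt (fun t : ℝ => f (x + t • p)) ⟪gradient f x, p⟫ 0 :=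
      (hfx'.comp_hasDerivAt (0 : ℝ) hline :)
    have hloc : IsLocalMin (fun t : ℝ => f (x + t • p)) 0 :=
      Eventually.of_forall fun t => by simpa using hmin t
    exact hloc.hasDerivAt_eq_zero hderiv
  · rw [gradient_eq_zero_of_not_differentiableAt hfx, inner_zero_left]

theorem strongConvex_exactLineSearch_decrease {m : ℝ}
    (hconv : ∀ x y : E, f x + ⟪gradient f x, y - x⟫ + (m / 2) * ‖y - x‖ ^ 2 ≤ f y)
    {x p : E} {β : ℝ} (hls : ∀ b : ℝ, f (x + β • p) ≤ f (x + b • p)) :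
    m / 2 * ‖β • p‖ ^ 2 ≤ f x - f (x + β • p) := by
  have horth : ⟪gradient f (x + β • p), p⟫ = 0 :=
    inner_gradient_eq_zero_of_forall_le_line fun t => by
      simpa [add_assoc, ← add_smul] using hls (β + t)
  have hstep : x - (x + β • p) = -(β • p) := by abel
  have h := hconv (x + β • p) x
  rw [hstep, inner_neg_right, inner_smul_right, horth, norm_neg] at h
  linarith

end LineSearch

theorem tendsto_zero_of_le_sub_succ_of_bddBelow {a d : ℕ → ℝ} (hd : ∀ n, 0 ≤ d n)
    (hda : ∀ n, d n ≤ a n - a (n + 1)) (ha : BddBelow (range a)) :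
    Tendsto d atTop (𝓝 0) := by
  have hanti : Antitone a := antitone_nat_of_succ_le fun n => by linarith [hd n, hda n]
  have hlim := tendsto_atTop_ciInf hanti ha
  have hdiff : Tendsto (fun n => a n - a (n + 1)) atTop (𝓝 0) := by
    simpa using hlim.sub (hlim.comp (tendsto_add_atTop_nat 1))
  exact squeeze_zero hd hda hdiff

theorem exact_line_search_decrease_general
    {E : Type*} [NormedAddCommGroup E] [InnerProductSpace ℝ E] [FiniteDimensional ℝ E]
    (f : E → ℝ)
    (m : ℝ) (hm : 0 < m)
    (hconv : ∀ x y : E,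
      f x + ⟪gradient f x, y - x⟫ + (m / 2) * ‖y - x‖ ^ 2 ≤ f y)
    (q p s : ℕ → E) (β : ℕ → ℝ)
    (hq : ∀ n, q (n + 1) = q n + β n • p n)
    (hls : ∀ n, ∀ b : ℝ, f (q n + β n • p n) ≤ f (q n + b • p n))
    (hs : ∀ n, s n = q (n + 1) - q n) :
    (∃ c : ℝ, 0 < c ∧ ∀ n, c * ‖s n‖ ^ 2 ≤ f (q n) - f (q n + s n)) ∧
      (BddBelow (Set.range f) →
        Filter.Tendsto (fun n => ‖s n‖) Filter.atTop (nhds 0)) := by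
  have hstep : ∀ n, s n = β n • p n := fun n => by rw [hs, hq, add_sub_cancel_left]
  have hdecrease : ∀ n, m / 2 * ‖s n‖ ^ 2 ≤ f (q n) - f (q n + s n) := fun n => by
    rw [hstep]; exact strongConvex_exactLineSearch_decrease hconv (hls n)
  refine ⟨⟨m / 2, by positivity, hdecrease⟩, fun hbdd => ?_⟩
  have hnext : ∀ n, q n + s n = q (n + 1) := fun n => by rw [hstep, hq]
  have hsq : Tendsto (fun n => m / 2 * ‖s n‖ ^ 2) atTop (𝓝 0) :=
    tendsto_zero_of_le_sub_succ_of_bddBelow (fun n => by positivity)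
      (fun n => by simpa [hnext] using hdecrease n) (hbdd.mono (range_comp_subset_range q f))
  have hnorm_sq : Tendsto (fun n => ‖s n‖ ^ 2) atTop (𝓝 0) := by
    simpa [← mul_assoc, hm.ne'] using hsq.const_mul (2 / m)
  simpa using hnorm_sq.sqrt

/-- For a differentiable, `m`-strongly convex `f` with iterates
generated by exact line search, there is `c > 0` with
`f(q^n) - f(q^n + s^n) ≥ c ‖s^n‖²` for all `n`, where `s^n = q^{n+1} - q^n`;
and if moreover `f` is bounded below, then `‖s^n‖ → 0`. -/
theorem exact_line_search_decrease
    {E : Type*} [NormedAddCommGroup E] [InnerProductSpace ℝ E] [FiniteDimensional ℝ E]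
    (f : E → ℝ) (hf : Differentiable ℝ f)
    (m : ℝ) (hm : 0 < m)
    (hconv : ∀ x y : E,
      f x + ⟪gradient f x, y - x⟫ + (m / 2) * ‖y - x‖ ^ 2 ≤ f y)
    (q p s : ℕ → E) (β : ℕ → ℝ)
    (hq : ∀ n, q (n + 1) = q n + β n • p n)
    (hls : ∀ n, ∀ b : ℝ, f (q n + β n • p n) ≤ f (q n + b • p n))
    (hs : ∀ n, s n = q (n + 1) - q n) :
    (∃ c : ℝ, 0 < c ∧ ∀ n, c * ‖s n‖ ^ 2 ≤ f (q n) - f (q n + s n)) ∧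
      (BddBelow (Set.range f) →
        Filter.Tendsto (fun n => ‖s n‖) Filter.atTop (nhds 0)) :=
  exact_line_search_decrease_general f m hm hconv q p s β hq hls hs
end

section
/- Let E be a finite-dimensional real inner product space and f : E → ℝ differentiable, uniformly convex (m-strongly convex for some m > 0), bounded below, with Lipschitz-continuous gradient ∇f. Let iterates be generated by the PRP conjugate gradient method with exact line search: q^{n+1} = q^n + β^n p^n, g^n = ∇f(q^n), p^0 = -g^0, p^{n+1} = -g^{n+1} + α^{n+1} p^n, α^{n+1} = ⟨g^{n+1}, g^{n+1} - g^n⟩/‖g^n‖², where β^n minimizes β ↦ f(q^n + β p^n) over ℝ (so that ⟨g^{n+1}, p^n⟩ = 0 whenever g^n ≠ 0). Then liminf_{n→∞} ‖g^n‖ = 0. -/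
open scoped RealInnerProductSpace

/-!
Exact line search gives `⟪g (n + 1), p n⟫ = 0`, hence `⟪g n, p n⟫ = -‖g n‖ ^ 2`. Strong convexity
then makes `f (q n)` drop by at least `m / 2 * ‖q (n + 1) - q n‖ ^ 2` per step, so the steps tend
to zero, and keeps the iterates in a ball, where the gradients are bounded. If `ε ≤ ‖g n‖`
eventually, the Lipschitz gradient makes `|α (n + 1)| ≤ 1 / 2` eventually, so the directions `p n`
stay bounded, and the descent estimate `f (q (n + 1)) ≤ f (q n) - ‖g n‖ ^ 4 / (4 * M * ‖p n‖ ^ 2)`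
drives `f (q n)` to `-∞`, contradicting boundedness below.
-/

open Filter Topology Set

lemma liminf_eq_zero_of_frequently_lt {ι : Type*} {l : Filter ι} {u : ι → ℝ} (hu : ∀ i, 0 ≤ u i)
    (h : ∀ ε > 0, ∃ᶠ i in l, u i < ε) : liminf u l = 0 := by
  have hfreq : ∀ ε > 0, ∃ᶠ i in l, u i ≤ ε := fun ε hε => (h ε hε).mono fun _ => le_of_lt
  refine le_antisymm (le_of_forall_pos_le_add fun ε hε => ?_) ?_
  · simpa using liminf_le_of_frequently_le (hfreq ε hε) (isBoundedUnder_of ⟨0, hu⟩)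
  · exact le_liminf_of_le (IsCoboundedUnder.of_frequently_le (hfreq 1 one_pos))
      (Eventually.of_forall hu)

lemma exists_eventually_le_of_succ_le_add_half {u : ℕ → ℝ} {c : ℝ}
    (h : ∀ᶠ n in atTop, u (n + 1) ≤ c + u n / 2) : ∃ P, ∀ᶠ n in atTop, u n ≤ P := by
  obtain ⟨N, hN⟩ := eventually_atTop.1 h
  refine ⟨max (u N) (2 * c), eventually_atTop.2 ⟨N, fun n hn => ?_⟩⟩
  induction n, hn using Nat.le_induction with
  | base => exact le_max_left _ _
  | succ n hn ih => linarith [hN n hn, le_max_right (u N) (2 * c)]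

lemma not_bddBelow_range_of_eventually_le_sub {u : ℕ → ℝ} {δ : ℝ} (hδ : 0 < δ)
    (h : ∀ᶠ n in atTop, u (n + 1) ≤ u n - δ) : ¬ BddBelow (range u) := by
  rintro ⟨c, hc⟩
  obtain ⟨N, hN⟩ := eventually_atTop.1 h
  have hdecr : ∀ k : ℕ, u (N + k) ≤ u N - k * δ := by
    intro k
    induction k with
    | zero => simp
    | succ k ih =>
      rw [← add_assoc]; push_cast
      linarith [hN (N + k) (Nat.le_add_right N k)]
  obtain ⟨k, hk⟩ := exists_nat_gt ((u N - c) / δ)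
  rw [div_lt_iff₀ hδ] at hk
  linarith [hdecr k, hc (mem_range_self (N + k))]

lemma Antitone.tendsto_sub_succ_zero {u : ℕ → ℝ} (hu : Antitone u) (hbdd : BddBelow (range u)) :
    Tendsto (fun n => u n - u (n + 1)) atTop (𝓝 0) := by
  have h := tendsto_atTop_ciInf hu hbdd
  simpa using h.sub (h.comp (tendsto_add_atTop_nat 1))

section Gradient

variable {E : Type*} [NormedAddCommGroup E] [InnerProductSpace ℝ E] [CompleteSpace E] {f : E → ℝ}

lemma inner_gradient_eq_zero_of_forall_le {x v : E} {b : ℝ}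
    (hf : DifferentiableAt ℝ f (x + b • v)) (hmin : ∀ t : ℝ, f (x + b • v) ≤ f (x + t • v)) :
    ⟪gradient f (x + b • v), v⟫ = 0 := by
  have hline : HasDerivAt (fun t : ℝ => x + t • v) v b := by
    simpa using ((hasDerivAt_id b).smul_const v).const_add x
  have hderiv := hf.hasGradientAt.hasFDerivAt.comp_hasDerivAt b hline
  rw [InnerProductSpace.toDual_apply_apply] at hderiv
  exact IsLocalMin.hasDerivAt_eq_zero (Eventually.of_forall hmin) hderiv

lemma norm_sub_le_of_le_of_strongConvex {m : ℝ} (hm : 0 < m)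
    (hconv : ∀ x y : E, f x + ⟪gradient f x, y - x⟫ + (m / 2) * ‖y - x‖ ^ 2 ≤ f y)
    {x y : E} (hxy : f y ≤ f x) : ‖y - x‖ ≤ 2 * ‖gradient f x‖ / m := by
  have hCS : -(‖gradient f x‖ * ‖y - x‖) ≤ ⟪gradient f x, y - x⟫ :=
    neg_le_of_abs_le (abs_real_inner_le_norm _ _)
  have hquad : m / 2 * ‖y - x‖ ^ 2 ≤ ‖gradient f x‖ * ‖y - x‖ := by linarith [hconv x y]
  rw [le_div_iff₀ hm]
  nlinarith [norm_nonneg (y - x), norm_nonneg (gradient f x)]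

lemma apply_add_smul_le_of_lipschitz_gradient {M : ℝ}
    (hconv : ∀ x y : E, f x + ⟪gradient f x, y - x⟫ ≤ f y)
    (hLip : ∀ x y : E, ‖gradient f x - gradient f y‖ ≤ M * ‖x - y‖) (x p : E) {t : ℝ}
    (ht : 0 ≤ t) : f (x + t • p) ≤ f x + t * ⟪gradient f x, p⟫ + M * t ^ 2 * ‖p‖ ^ 2 := by
  set z := x + t • p
  have hz : f z - t * ⟪gradient f z, p⟫ ≤ f x := by
    have := hconv z x
    rwa [show x - z = -(t • p) by simp [z], inner_neg_right, inner_smul_right,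
      ← sub_eq_add_neg] at this
  have hgrad : ⟪gradient f z, p⟫ ≤ ⟪gradient f x, p⟫ + M * t * ‖p‖ ^ 2 := by
    have hdiff : ⟪gradient f z - gradient f x, p⟫ ≤ M * ‖z - x‖ * ‖p‖ :=
      (real_inner_le_norm _ _).trans (mul_le_mul_of_nonneg_right (hLip z x) (norm_nonneg p))
    rw [inner_sub_left, show z - x = t • p by simp [z], norm_smul, Real.norm_of_nonneg ht]
      at hdiff
    linarith
  nlinarith [mul_le_mul_of_nonneg_left hgrad ht]

end Gradient

section PRP

variable {E : Type*} [NormedAddCommGroup E] [InnerProductSpace ℝ E] [CompleteSpace E]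

structure IsPRPExactLineSearch (f : E → ℝ) (q p g : ℕ → E) (β α : ℕ → ℝ) : Prop where
  grad_eq : ∀ n, g n = gradient f (q n)
  iterate_succ : ∀ n, q (n + 1) = q n + β n • p n
  dir_zero : p 0 = -g 0
  coeff_succ : ∀ n, α (n + 1) = ⟪g (n + 1), g (n + 1) - g n⟫ / ‖g n‖ ^ 2
  dir_succ : ∀ n, p (n + 1) = -g (n + 1) + α (n + 1) • p n
  lineSearch : ∀ n, ∀ b : ℝ, f (q n + β n • p n) ≤ f (q n + b • p n)

namespace IsPRPExactLineSearch

variable {f : E → ℝ} {q p g : ℕ → E} {β α : ℕ → ℝ} {m M : ℝ}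

lemma antitone_objective (h : IsPRPExactLineSearch f q p g β α) : Antitone (f ∘ q) :=
  antitone_nat_of_succ_le fun n => by simpa [← h.iterate_succ] using h.lineSearch n 0

lemma inner_grad_succ_dir (h : IsPRPExactLineSearch f q p g β α) (hf : Differentiable ℝ f)
    (n : ℕ) : ⟪g (n + 1), p n⟫ = 0 := by
  rw [h.grad_eq, h.iterate_succ]
  exact inner_gradient_eq_zero_of_forall_le (hf _) (h.lineSearch n)

lemma inner_grad_dir (h : IsPRPExactLineSearch f q p g β α) (hf : Differentiable ℝ f) (n : ℕ) :
    ⟪g n, p n⟫ = -‖g n‖ ^ 2 := by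
  cases n with
  | zero => rw [h.dir_zero, inner_neg_right, real_inner_self_eq_norm_sq]
  | succ n =>
    rw [h.dir_succ, inner_add_right, inner_neg_right, inner_smul_right,
      h.inner_grad_succ_dir hf, real_inner_self_eq_norm_sq, mul_zero, add_zero]

lemma norm_grad_le_norm_dir (h : IsPRPExactLineSearch f q p g β α) (hf : Differentiable ℝ f)
    (n : ℕ) : ‖g n‖ ≤ ‖p n‖ := by
  have hsq : ‖g n‖ ^ 2 ≤ ‖g n‖ * ‖p n‖ := by
    linarith [neg_le_of_abs_le (abs_real_inner_le_norm (g n) (p n)), h.inner_grad_dir hf n]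
  nlinarith [norm_nonneg (g n), norm_nonneg (p n)]

lemma norm_dir_succ_le (h : IsPRPExactLineSearch f q p g β α) (n : ℕ) :
    ‖p (n + 1)‖ ≤ ‖g (n + 1)‖ + |α (n + 1)| * ‖p n‖ := by
  simpa [h.dir_succ, norm_smul] using norm_add_le (-g (n + 1)) (α (n + 1) • p n)

lemma abs_coeff_succ_le (h : IsPRPExactLineSearch f q p g β α)
    (hLip : ∀ x y : E, ‖gradient f x - gradient f y‖ ≤ M * ‖x - y‖) (n : ℕ) :
    |α (n + 1)| ≤ ‖g (n + 1)‖ * (M * ‖q (n + 1) - q n‖) / ‖g n‖ ^ 2 := by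
  have hg : ‖g (n + 1) - g n‖ ≤ M * ‖q (n + 1) - q n‖ := by
    rw [h.grad_eq, h.grad_eq]; exact hLip _ _
  rw [h.coeff_succ, abs_div, abs_of_nonneg (sq_nonneg ‖g n‖)]
  exact div_le_div_of_nonneg_right ((abs_real_inner_le_norm _ _).trans (by gcongr))
    (sq_nonneg _)

lemma norm_grad_le (h : IsPRPExactLineSearch f q p g β α) (hm : 0 < m)
    (hconv : ∀ x y : E, f x + ⟪gradient f x, y - x⟫ + (m / 2) * ‖y - x‖ ^ 2 ≤ f y)
    (hM : 0 ≤ M) (hLip : ∀ x y : E, ‖gradient f x - gradient f y‖ ≤ M * ‖x - y‖) (n : ℕ) :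
    ‖g n‖ ≤ ‖g 0‖ + M * (2 * ‖g 0‖ / m) := by
  have hq : ‖q n - q 0‖ ≤ 2 * ‖g 0‖ / m := by
    rw [h.grad_eq 0]
    exact norm_sub_le_of_le_of_strongConvex hm hconv (h.antitone_objective (Nat.zero_le n))
  have hg : ‖g n - g 0‖ ≤ M * ‖q n - q 0‖ := by
    rw [h.grad_eq, h.grad_eq]; exact hLip _ _
  linarith [norm_sub_norm_le (g n) (g 0), mul_le_mul_of_nonneg_left hq hM]

lemma tendsto_norm_step (h : IsPRPExactLineSearch f q p g β α) (hf : Differentiable ℝ f)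
    (hm : 0 < m)
    (hconv : ∀ x y : E, f x + ⟪gradient f x, y - x⟫ + (m / 2) * ‖y - x‖ ^ 2 ≤ f y)
    (hbdd : BddBelow (range f)) :
    Tendsto (fun n => ‖q (n + 1) - q n‖) atTop (𝓝 0) := by
  have hdecr : ∀ n, ‖q (n + 1) - q n‖ ^ 2 ≤ 2 / m * (f (q n) - f (q (n + 1))) := by
    intro n
    have horth : ⟪g (n + 1), q n - q (n + 1)⟫ = 0 := by
      rw [h.iterate_succ, sub_add_cancel_left, inner_neg_right, inner_smul_right,
        h.inner_grad_succ_dir hf, mul_zero, neg_zero]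
    have := hconv (q (n + 1)) (q n)
    rw [← h.grad_eq, horth, norm_sub_rev] at this
    rw [div_mul_eq_mul_div, le_div_iff₀ hm]
    linarith
  have hdiff := h.antitone_objective.tendsto_sub_succ_zero (hbdd.mono (range_comp_subset_range q f))
  have hsq : Tendsto (fun n => ‖q (n + 1) - q n‖ ^ 2) atTop (𝓝 0) :=
    squeeze_zero (fun n => by positivity) hdecr (by simpa using hdiff.const_mul (2 / m))
  simpa [Real.sqrt_sq (norm_nonneg _)] using hsq.sqrt

lemma objective_succ_le (h : IsPRPExactLineSearch f q p g β α) (hf : Differentiable ℝ f)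
    (hconv : ∀ x y : E, f x + ⟪gradient f x, y - x⟫ ≤ f y) (hM : 0 < M)
    (hLip : ∀ x y : E, ‖gradient f x - gradient f y‖ ≤ M * ‖x - y‖) {n : ℕ} (hgn : g n ≠ 0) :
    f (q (n + 1)) ≤ f (q n) - ‖g n‖ ^ 4 / (4 * M * ‖p n‖ ^ 2) := by
  have hp : 0 < ‖p n‖ := (norm_pos_iff.2 hgn).trans_le (h.norm_grad_le_norm_dir hf n)
  -- `t` minimises the quadratic upper bound of `apply_add_smul_le_of_lipschitz_gradient`
  set t := ‖g n‖ ^ 2 / (2 * M * ‖p n‖ ^ 2)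
  have hstep := apply_add_smul_le_of_lipschitz_gradient hconv hLip (q n) (p n)
    (t := t) (by positivity)
  rw [← h.grad_eq, h.inner_grad_dir hf] at hstep
  calc f (q (n + 1)) ≤ f (q n + t • p n) := by rw [h.iterate_succ]; exact h.lineSearch n t
    _ ≤ f (q n) + t * -‖g n‖ ^ 2 + M * t ^ 2 * ‖p n‖ ^ 2 := hstep
    _ = f (q n) - ‖g n‖ ^ 4 / (4 * M * ‖p n‖ ^ 2) := by simp only [t]; field_simp; ring

lemma eventually_abs_coeff_le_half (h : IsPRPExactLineSearch f q p g β α) (hM : 0 ≤ M)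
    (hLip : ∀ x y : E, ‖gradient f x - gradient f y‖ ≤ M * ‖x - y‖) {G : ℝ}
    (hG : ∀ n, ‖g n‖ ≤ G) (hstep : Tendsto (fun n => ‖q (n + 1) - q n‖) atTop (𝓝 0))
    {ε : ℝ} (hε : 0 < ε) (hgε : ∀ᶠ n in atTop, ε ≤ ‖g n‖) :
    ∀ᶠ n in atTop, |α (n + 1)| ≤ 1 / 2 := by
  have hsmall : ∀ᶠ n in atTop, G * (M * ‖q (n + 1) - q n‖) ≤ ε ^ 2 / 2 := by
    have := (hstep.const_mul M).const_mul G
    rw [mul_zero, mul_zero] at this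
    exact this.eventually (eventually_le_nhds (by positivity))
  filter_upwards [hgε, hsmall] with n hgn hn
  calc |α (n + 1)| ≤ ‖g (n + 1)‖ * (M * ‖q (n + 1) - q n‖) / ‖g n‖ ^ 2 :=
        h.abs_coeff_succ_le hLip n
    _ ≤ (ε ^ 2 / 2) / ε ^ 2 := by
        gcongr
        exact (mul_le_mul_of_nonneg_right (hG _) (by positivity)).trans hn
    _ = 1 / 2 := by field_simp

lemma exists_eventually_norm_dir_le (h : IsPRPExactLineSearch f q p g β α) {G : ℝ}
    (hG : ∀ n, ‖g n‖ ≤ G) (hcoeff : ∀ᶠ n in atTop, |α (n + 1)| ≤ 1 / 2) :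
    ∃ P, ∀ᶠ n in atTop, ‖p n‖ ≤ P := by
  refine exists_eventually_le_of_succ_le_add_half (c := G) ?_
  filter_upwards [hcoeff] with n hn
  nlinarith [h.norm_dir_succ_le n, hG (n + 1), norm_nonneg (p n)]

lemma exists_pos_eventually_objective_succ_le_sub (h : IsPRPExactLineSearch f q p g β α)
    (hf : Differentiable ℝ f) (hconv : ∀ x y : E, f x + ⟪gradient f x, y - x⟫ ≤ f y)
    (hM : 0 < M) (hLip : ∀ x y : E, ‖gradient f x - gradient f y‖ ≤ M * ‖x - y‖) {ε P : ℝ}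
    (hε : 0 < ε) (hgε : ∀ᶠ n in atTop, ε ≤ ‖g n‖) (hP : ∀ᶠ n in atTop, ‖p n‖ ≤ P) :
    ∃ δ > 0, ∀ᶠ n in atTop, f (q (n + 1)) ≤ f (q n) - δ := by
  obtain ⟨n₀, hgn₀, hpn₀⟩ := (hgε.and hP).exists
  have hP0 : 0 < P := hε.trans_le (hgn₀.trans ((h.norm_grad_le_norm_dir hf n₀).trans hpn₀))
  refine ⟨ε ^ 4 / (4 * M * P ^ 2), by positivity, ?_⟩
  filter_upwards [hgε, hP] with n hgn hpn
  have hgpos : 0 < ‖g n‖ := hε.trans_le hgn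
  have hppos : 0 < ‖p n‖ := hgpos.trans_le (h.norm_grad_le_norm_dir hf n)
  have hδ : ε ^ 4 / (4 * M * P ^ 2) ≤ ‖g n‖ ^ 4 / (4 * M * ‖p n‖ ^ 2) := by gcongr
  linarith [h.objective_succ_le hf hconv hM hLip (norm_pos_iff.1 hgpos)]

end IsPRPExactLineSearch

end PRP

/-- Global convergence of the PRP conjugate gradient method with
exact line search for a differentiable, uniformly (strongly) convex, bounded
below objective with Lipschitz continuous gradient:
`liminf_{n→∞} ‖g^n‖ = 0`. -/
theorem prp_liminf_gradient_zero
    {E : Type*} [NormedAddCommGroup E] [InnerProductSpace ℝ E] [FiniteDimensional ℝ E]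
    (f : E → ℝ) (hf : Differentiable ℝ f)
    (m : ℝ) (hm : 0 < m)
    (hconv : ∀ x y : E,
      f x + ⟪gradient f x, y - x⟫ + (m / 2) * ‖y - x‖ ^ 2 ≤ f y)
    (hbdd : BddBelow (Set.range f))
    (M : ℝ) (hM : 0 < M)
    (hLip : ∀ x y : E, ‖gradient f x - gradient f y‖ ≤ M * ‖x - y‖)
    (q p g : ℕ → E) (β α : ℕ → ℝ)
    (hg : ∀ n, g n = gradient f (q n))
    (hq : ∀ n, q (n + 1) = q n + β n • p n)
    (hp0 : p 0 = -g 0)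
    (hα : ∀ n, α (n + 1) = ⟪g (n + 1), g (n + 1) - g n⟫ / ‖g n‖ ^ 2)
    (hp : ∀ n, p (n + 1) = -g (n + 1) + α (n + 1) • p n)
    (hls : ∀ n, ∀ b : ℝ, f (q n + β n • p n) ≤ f (q n + b • p n)) :
    Filter.liminf (fun n => ‖g n‖) Filter.atTop = 0 := by
  have hprp : IsPRPExactLineSearch f q p g β α := ⟨hg, hq, hp0, hα, hp, hls⟩
  have hconv₀ : ∀ x y : E, f x + ⟪gradient f x, y - x⟫ ≤ f y := fun x y =>
    (le_add_of_nonneg_right (by positivity)).trans (hconv x y)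
  refine liminf_eq_zero_of_frequently_lt (fun n => norm_nonneg _) fun ε hε => ?_
  by_contra hfreq
  have hgε : ∀ᶠ n in atTop, ε ≤ ‖g n‖ := by simpa using hfreq
  have hG := hprp.norm_grad_le hm hconv hM.le hLip
  have hcoeff := hprp.eventually_abs_coeff_le_half hM.le hLip hG
    (hprp.tendsto_norm_step hf hm hconv hbdd) hε hgε
  obtain ⟨P, hP⟩ := hprp.exists_eventually_norm_dir_le hG hcoeff
  obtain ⟨δ, hδ, hdesc⟩ :=
    hprp.exists_pos_eventually_objective_succ_le_sub hf hconv₀ hM hLip hε hgε hP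
  exact not_bddBelow_range_of_eventually_le_sub hδ hdesc (hbdd.mono (range_comp_subset_range q f))
end

section
/- Let f : ℝ → ℝ be continuously differentiable, bounded below, with derivative f' Lipschitz continuous with constant M > 0. Fix ρ ∈ (0, 1/2) and σ ∈ (ρ, 1), and let the steepest descent iterates be L^{n+1} = L^n + λ^n d^n with d^n = -f'(L^n) and step size λ^n > 0 satisfying the Wolfe–Powell conditions f'(L^{n+1})·d^n ≥ σ f'(L^n)·d^n and f(L^{n+1}) ≤ f(L^n) - ρ λ^n (d^n)². Then f'(L^n) → 0 as n → ∞ (equivalently lim_{n→∞} |f'(L^n)|² = 0). -/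
/-!
Along a steepest descent step from `x` with `g = f' x`, the curvature condition and the
Lipschitz bound give `(1 - σ) g² ≤ (f'(x') - g)(-g) ≤ M λ g²`: the step cannot be too short.
Multiplying the sufficient decrease condition `ρ λ g² ≤ f x - f x'` by `M` then yields
`ρ (1 - σ) g² ≤ M (f x - f x')`. Since `f` is bounded below, these decreases telescope to a
bounded sum, so `∑ g_n²` converges and `g_n → 0`.
-/

open Filter Topology

section WolfeStep

variable {f g : ℝ → ℝ} {M ρ σ lam x : ℝ}

theorem one_sub_mul_sq_le_of_curvature (hLip : ∀ x y, |g x - g y| ≤ M * |x - y|)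
    (hlam : 0 < lam) (hcurv : σ * (g x * -g x) ≤ g (x + lam * -g x) * -g x) :
    (1 - σ) * g x ^ 2 ≤ M * lam * g x ^ 2 :=
  calc (1 - σ) * g x ^ 2 ≤ (g (x + lam * -g x) - g x) * -g x := by linarith
    _ ≤ |g (x + lam * -g x) - g x| * |g x| := by
        rw [← abs_neg (g x), ← abs_mul]; exact le_abs_self _
    _ ≤ M * |x + lam * -g x - x| * |g x| := by gcongr; exact hLip _ _
    _ = M * lam * g x ^ 2 := by
        rw [add_sub_cancel_left, abs_mul, abs_neg, abs_of_pos hlam, ← sq_abs (g x)]; ring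

theorem mul_sq_deriv_le_of_wolfe (hM : 0 ≤ M) (hρ : 0 ≤ ρ)
    (hLip : ∀ x y, |deriv f x - deriv f y| ≤ M * |x - y|) (hlam : 0 < lam)
    (hcurv : σ * (deriv f x * -deriv f x) ≤ deriv f (x + lam * -deriv f x) * -deriv f x)
    (hdec : f (x + lam * -deriv f x) ≤ f x - ρ * lam * (-deriv f x) ^ 2) :
    ρ * (1 - σ) * deriv f x ^ 2 ≤ M * (f x - f (x + lam * -deriv f x)) :=
  calc ρ * (1 - σ) * deriv f x ^ 2 ≤ ρ * (M * lam * deriv f x ^ 2) := by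
        rw [mul_assoc]; exact mul_le_mul_of_nonneg_left
          (one_sub_mul_sq_le_of_curvature hLip hlam hcurv) hρ
    _ = M * (ρ * lam * (-deriv f x) ^ 2) := by ring
    _ ≤ M * (f x - f (x + lam * -deriv f x)) := by gcongr; linarith

end WolfeStep

theorem summable_of_const_mul_le_sub_succ {a u : ℕ → ℝ} {c B : ℝ} (hc : 0 < c)
    (ha : ∀ n, 0 ≤ a n) (hu : ∀ n, B ≤ u n) (h : ∀ n, c * a n ≤ u n - u (n + 1)) :
    Summable a := by
  refine summable_of_sum_range_le (c := (u 0 - B) / c) ha fun n => (le_div_iff₀' hc).2 ?_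
  calc c * ∑ k ∈ Finset.range n, a k ≤ ∑ k ∈ Finset.range n, (u k - u (k + 1)) := by
        rw [Finset.mul_sum]; exact Finset.sum_le_sum fun k _ => h k
    _ = u 0 - u n := Finset.sum_range_sub' u n
    _ ≤ u 0 - B := by linarith [hu n]

theorem tendsto_zero_of_tendsto_sq_zero {α : Type*} {l : Filter α} {g : α → ℝ}
    (h : Tendsto (fun n => g n ^ 2) l (𝓝 0)) : Tendsto g l (𝓝 0) :=
  (tendsto_zero_iff_abs_tendsto_zero g).2 <| by
    simpa [Function.comp_def, Real.sqrt_sq_eq_abs] using h.sqrt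

theorem steepest_descent_gradient_to_zero_general
    (f : ℝ → ℝ)
    (hbdd : BddBelow (Set.range f))
    (M : ℝ)
    (hLip : ∀ x y : ℝ, |deriv f x - deriv f y| ≤ M * |x - y|)
    (ρ σ : ℝ) (hρ : ρ ∈ Set.Ioo (0 : ℝ) (1 / 2)) (hσ : σ ∈ Set.Ioo ρ 1)
    (L d lam : ℕ → ℝ)
    (hd : ∀ n, d n = -deriv f (L n))
    (hL : ∀ n, L (n + 1) = L n + lam n * d n)
    (hlam : ∀ n, 0 < lam n)
    (hcurv : ∀ n, σ * (deriv f (L n) * d n) ≤ deriv f (L (n + 1)) * d n)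
    (hdec : ∀ n, f (L (n + 1)) ≤ f (L n) - ρ * lam n * (d n) ^ 2) :
    Filter.Tendsto (fun n => deriv f (L n)) Filter.atTop (nhds 0) := by
  obtain ⟨B, hB⟩ := hbdd
  have hM : 0 ≤ M := by simpa using (abs_nonneg _).trans (hLip 1 0)
  have hc : 0 < ρ * (1 - σ) := mul_pos hρ.1 (by linarith [hσ.2])
  have hstep : ∀ n, ρ * (1 - σ) * deriv f (L n) ^ 2 ≤ M * f (L n) - M * f (L (n + 1)) := by
    intro n
    have hcurv' := hcurv n
    have hdec' := hdec n
    rw [hL, hd] at hcurv' hdec' ⊢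
    rw [← mul_sub]
    exact mul_sq_deriv_le_of_wolfe hM hρ.1.le hLip (hlam n) hcurv' hdec'
  have hsum : Summable fun n => deriv f (L n) ^ 2 :=
    summable_of_const_mul_le_sub_succ hc (fun n => sq_nonneg _)
      (fun n => mul_le_mul_of_nonneg_left (hB (Set.mem_range_self (L n))) hM) hstep
  exact tendsto_zero_of_tendsto_sq_zero hsum.tendsto_atTop_zero

/-- For steepest descent on a continuously differentiable `f : ℝ → ℝ`,
bounded below, with `M`-Lipschitz derivative and Wolfe–Powell step sizes
(parameters `ρ ∈ (0,1/2)`, `σ ∈ (ρ,1)`), the derivatives along the iterates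
tend to zero: `f'(L^n) → 0`. -/
theorem steepest_descent_gradient_to_zero
    (f : ℝ → ℝ) (hf : ContDiff ℝ 1 f)
    (hbdd : BddBelow (Set.range f))
    (M : ℝ) (hM : 0 < M)
    (hLip : ∀ x y : ℝ, |deriv f x - deriv f y| ≤ M * |x - y|)
    (ρ σ : ℝ) (hρ : ρ ∈ Set.Ioo (0 : ℝ) (1 / 2)) (hσ : σ ∈ Set.Ioo ρ 1)
    (L d lam : ℕ → ℝ)
    (hd : ∀ n, d n = -deriv f (L n))
    (hL : ∀ n, L (n + 1) = L n + lam n * d n)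
    (hlam : ∀ n, 0 < lam n)
    (hcurv : ∀ n, σ * (deriv f (L n) * d n) ≤ deriv f (L (n + 1)) * d n)
    (hdec : ∀ n, f (L (n + 1)) ≤ f (L n) - ρ * lam n * (d n) ^ 2) :
    Filter.Tendsto (fun n => deriv f (L n)) Filter.atTop (nhds 0) :=
  steepest_descent_gradient_to_zero_general f hbdd M hLip ρ σ hρ hσ L d lam hd hL hlam hcurv hdec
end
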